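/- arXiv:2605.30496 — 3 statements merged into one kernel-verified Lean document; each statement's English description precedes it below -/
import Mathlib

section
/- Let n be a positive integer and let p(y) = (H_{n+1} - H_y)/(n+1) for y = 0, 1, ..., n, where H_m is the m-th harmonic number. Then the variance of this distribution is Σ_{y=0}^{n} y² · p(y) - (n/4)² = 7n²/144 + 5n/36. -/
/-- `H m` is the `m`-th harmonic number, with `H 0 = 0`. -/
noncomputable def H (m : ℕ) : ℝ := ∑ j ∈ Finset.range m, 1 / ((j : ℝ) + 1)

/-!
Passing from `n` to `n + 1` adds `1/(n+2)` to every tail `H (n+2) - H y`, so the weighted tail sums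
`S n = ∑_{y ≤ n} y² (H (n+1) - H y)` satisfy `S (n+1) = S n + (∑_{y ≤ n+1} y²)/(n+2)`. With
`∑ y² = n(n+1)(2n+1)/6` this gives `S n = n(n+1)(4n+5)/36`; dividing by `n + 1` and subtracting
`(n/4)²` leaves `7n²/144 + 5n/36`.
-/

open Finset

lemma H_succ (m : ℕ) : H (m + 1) = H m + 1 / ((m : ℝ) + 1) := by
  simp [H, sum_range_succ]

lemma sum_mul_H_sub_succ (f : ℕ → ℝ) (m : ℕ) :
    ∑ y ∈ range (m + 1), f y * (H (m + 1) - H y)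
      = ∑ y ∈ range m, f y * (H m - H y) + (∑ y ∈ range (m + 1), f y) / ((m : ℝ) + 1) := by
  rw [sum_range_succ, sum_range_succ, H_succ m, add_div, sum_div, ← add_assoc, ← sum_add_distrib]
  congr 1
  · exact sum_congr rfl fun y _ => by ring
  · ring

lemma sum_range_succ_sq (n : ℕ) :
    ∑ y ∈ range (n + 1), (y : ℝ) ^ 2 = n * (n + 1) * (2 * n + 1) / 6 := by
  induction n with
  | zero => simp
  | succ k ih =>
    rw [sum_range_succ, ih]
    push_cast
    ring

lemma sum_sq_mul_H_sub (n : ℕ) :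
    ∑ y ∈ range (n + 1), (y : ℝ) ^ 2 * (H (n + 1) - H y) = n * (n + 1) * (4 * n + 5) / 36 := by
  induction n with
  | zero => simp
  | succ k ih =>
    rw [sum_mul_H_sub_succ, ih, sum_range_succ_sq]
    push_cast
    field_simp
    ring

theorem marginal_variance_general (n : ℕ) :
    ∑ y ∈ Finset.range (n + 1),
          (y : ℝ) ^ 2 * ((H (n + 1) - H y) / ((n : ℝ) + 1)) - ((n : ℝ) / 4) ^ 2
      = 7 * (n : ℝ) ^ 2 / 144 + 5 * (n : ℝ) / 36 := by
  simp_rw [← mul_div_assoc]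
  rw [← sum_div, sum_sq_mul_H_sub]
  field_simp
  ring

theorem marginal_variance (n : ℕ) (hn : 0 < n) :
    ∑ y ∈ Finset.range (n + 1),
          (y : ℝ) ^ 2 * ((H (n + 1) - H y) / ((n : ℝ) + 1)) - ((n : ℝ) / 4) ^ 2
      = 7 * (n : ℝ) ^ 2 / 144 + 5 * (n : ℝ) / 36 :=
  marginal_variance_general n
end

section
/- Let n be a positive integer and y an integer with 0 ≤ y ≤ n. For every p₂ ∈ (0,1), the marginal posterior density of p₂ given Y = y satisfies π(p₂ | y) = ∫₀¹ C(n,y)(p₁p₂)^y (1-p₁p₂)^{n-y} dp₁ / p(y) = Σ_{k=0}^{n-y} w_k · f_{k+y+1, n-y-k+1}(p₂), where p(y) = ∫₀¹∫₀¹ C(n,y)(p₁p₂)^y(1-p₁p₂)^{n-y} dp₁ dp₂, f_{a,b}(z) = z^{a-1}(1-z)^{b-1} Γ(a+b)/(Γ(a)Γ(b)) is the Beta(a,b) density, and the weights are w_k = 1/((k+y+1)(H_{n+1}-H_y)) for k = 0, ..., n-y, which are nonnegative and sum to 1. -/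
/-- The mixture weights `w_k = 1/((k+y+1)(H_{n+1}-H_y))`. -/
noncomputable def w (n y k : ℕ) : ℝ := 1 / (((k : ℝ) + y + 1) * (H (n + 1) - H y))

/-- The Beta(a, b) density `f_{a,b}(z) = z^{a-1} (1-z)^{b-1} Γ(a+b)/(Γ(a)Γ(b))`. -/
noncomputable def betaDensity (a b : ℝ) (z : ℝ) : ℝ :=
  z ^ (a - 1) * (1 - z) ^ (b - 1) * Real.Gamma (a + b) / (Real.Gamma a * Real.Gamma b)

/-!
Writing `1 - p₁p₂ = (1 - p₂) + p₂(1 - p₁)` and expanding binomially turns the `p₁`-integral of the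
likelihood into a combination of Beta integrals `∫₀¹ xᵃ(1-x)ᵇ = a! b!/(a+b+1)!`; the coefficients
collapse to `1/((n+1)(y+k+1))` times the normalising constant of `f_{y+k+1, n-y-k+1}`, so the
likelihood is an unnormalised Beta mixture in `p₂`. Integrating over `p₂` gives
`p(y) = (H_{n+1} - H_y)/(n+1)`, and dividing by it yields the weights `w_k`.
-/

open Finset
open scoped Nat

theorem integral_pow_mul_one_sub_pow (a b : ℕ) :
    ∫ x in (0:ℝ)..1, x ^ a * (1 - x) ^ b = (a ! * b ! / (a + b + 1)! : ℝ) := by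
  induction b generalizing a with
  | zero =>
    simp only [pow_zero, mul_one, integral_pow, add_zero, Nat.factorial_succ]
    push_cast
    field_simp
    simp
  | succ b ih =>
    have split (x : ℝ) :
        x ^ a * (1 - x) ^ (b + 1) = x ^ a * (1 - x) ^ b - x ^ (a + 1) * (1 - x) ^ b := by ring
    simp_rw [split]
    rw [intervalIntegral.integral_sub (Continuous.intervalIntegrable (by fun_prop) _ _)
      (Continuous.intervalIntegrable (by fun_prop) _ _), ih, ih,
      show a + 1 + b + 1 = a + b + 1 + 1 by ring, show a + (b + 1) + 1 = a + b + 1 + 1 by ring]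
    simp only [Nat.factorial_succ]
    push_cast
    field_simp
    ring

theorem betaDensity_natCast_add_one (a b : ℕ) (z : ℝ) :
    betaDensity ((a : ℝ) + 1) ((b : ℝ) + 1) z =
      z ^ a * (1 - z) ^ b * (a + b + 1)! / (a ! * b !) := by
  have hsum : (a : ℝ) + 1 + ((b : ℝ) + 1) = ((a + b + 1 : ℕ) : ℝ) + 1 := by push_cast; ring
  simp only [betaDensity, add_sub_cancel_right, Real.rpow_natCast, hsum,
    Real.Gamma_nat_eq_factorial]

theorem integral_betaDensity_natCast_add_one (a b : ℕ) :
    ∫ z in (0:ℝ)..1, betaDensity ((a : ℝ) + 1) ((b : ℝ) + 1) z = 1 := by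
  simp only [betaDensity_natCast_add_one, intervalIntegral.integral_div,
    intervalIntegral.integral_mul_const, integral_pow_mul_one_sub_pow]
  field_simp

theorem intervalIntegrable_betaDensity_natCast_add_one (a b : ℕ) (s t : ℝ) :
    IntervalIntegrable (betaDensity ((a : ℝ) + 1) ((b : ℝ) + 1)) MeasureTheory.volume s t := by
  simp only [funext (betaDensity_natCast_add_one a b)]
  exact Continuous.intervalIntegrable (by fun_prop) s t

theorem H_add_sub_H (y m : ℕ) : H (y + m) - H y = ∑ k ∈ range m, 1 / (((y + k : ℕ) : ℝ) + 1) := by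
  simp [H, sum_range_add]

theorem integral_likelihood_eq_sum_betaDensity (n y : ℕ) (hy : y ≤ n) (q : ℝ) :
    ∫ p1 in (0:ℝ)..1, (n.choose y : ℝ) * (p1 * q) ^ y * (1 - p1 * q) ^ (n - y) =
      ∑ k ∈ range (n - y + 1), 1 / (((n : ℝ) + 1) * (((y + k : ℕ) : ℝ) + 1)) *
        betaDensity (((y + k : ℕ) : ℝ) + 1) (((n - (y + k) : ℕ) : ℝ) + 1) q := by
  have expand (p1 : ℝ) : (n.choose y : ℝ) * (p1 * q) ^ y * (1 - p1 * q) ^ (n - y) =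
      ∑ k ∈ range (n - y + 1),
        (n.choose y * (n - y).choose k * q ^ (y + k) * (1 - q) ^ (n - (y + k)) : ℝ) *
          (p1 ^ y * (1 - p1) ^ k) := by
    rw [show 1 - p1 * q = q * (1 - p1) + (1 - q) by ring, add_pow, mul_sum]
    refine sum_congr rfl fun k _ => ?_
    rw [← Nat.sub_sub, mul_pow q]
    ring
  simp_rw [expand]
  rw [intervalIntegral.integral_finsetSum fun k _ =>
    Continuous.intervalIntegrable (by fun_prop) _ _]
  refine sum_congr rfl fun k hk => ?_
  have hk : k ≤ n - y := Nat.lt_succ_iff.mp (mem_range.mp hk)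
  rw [intervalIntegral.integral_const_mul, integral_pow_mul_one_sub_pow,
    betaDensity_natCast_add_one, Nat.add_sub_cancel' (by omega), Nat.cast_choose ℝ hy,
    Nat.cast_choose ℝ hk, Nat.sub_sub]
  simp only [Nat.factorial_succ]
  push_cast
  field_simp

theorem integral_marginal_likelihood (n y : ℕ) (hy : y ≤ n) :
    ∫ q in (0:ℝ)..1, ∫ p1 in (0:ℝ)..1,
        (n.choose y : ℝ) * (p1 * q) ^ y * (1 - p1 * q) ^ (n - y) =
      (H (n + 1) - H y) / ((n : ℝ) + 1) := by
  simp_rw [integral_likelihood_eq_sum_betaDensity n y hy]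
  rw [intervalIntegral.integral_finsetSum fun k _ =>
    (intervalIntegrable_betaDensity_natCast_add_one _ _ _ _).const_mul _]
  simp only [intervalIntegral.integral_const_mul, integral_betaDensity_natCast_add_one, mul_one]
  rw [show n + 1 = y + (n - y + 1) by omega, H_add_sub_H, sum_div]
  exact sum_congr rfl fun k _ => by rw [div_div, mul_comm]

theorem H_sub_H_pos {n y : ℕ} (hy : y ≤ n) : 0 < H (n + 1) - H y := by
  obtain ⟨m, rfl⟩ := Nat.exists_eq_add_of_le hy
  rw [add_assoc, H_add_sub_H]
  exact sum_pos (fun _ _ => by positivity) nonempty_range_add_one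

theorem w_eq_div (n y k : ℕ) : w n y k = 1 / (((y + k : ℕ) : ℝ) + 1) / (H (n + 1) - H y) := by
  rw [w, div_div]
  push_cast
  ring

theorem sum_w_eq_one {n y : ℕ} (hy : y ≤ n) : ∑ k ∈ range (n - y + 1), w n y k = 1 := by
  simp only [w_eq_div, ← sum_div]
  rw [← H_add_sub_H, show y + (n - y + 1) = n + 1 by omega, div_self (H_sub_H_pos hy).ne']

theorem posterior_density_beta_mixture_general (n y : ℕ) (hy : y ≤ n)
    (p2 : ℝ) :
    (∀ k ∈ Finset.range (n - y + 1), 0 ≤ w n y k) ∧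
    (∑ k ∈ Finset.range (n - y + 1), w n y k = 1) ∧
    (∫ p1 in (0:ℝ)..1, (n.choose y : ℝ) * (p1 * p2) ^ y * (1 - p1 * p2) ^ (n - y)) /
        (∫ q2 in (0:ℝ)..1, ∫ p1 in (0:ℝ)..1,
            (n.choose y : ℝ) * (p1 * q2) ^ y * (1 - p1 * q2) ^ (n - y))
      = ∑ k ∈ Finset.range (n - y + 1),
          w n y k * betaDensity ((k : ℝ) + y + 1) ((n : ℝ) - y - k + 1) p2 := by
  have hH := H_sub_H_pos hy
  refine ⟨fun k _ => by rw [w_eq_div]; positivity, sum_w_eq_one hy, ?_⟩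
  rw [integral_likelihood_eq_sum_betaDensity n y hy, integral_marginal_likelihood n y hy, sum_div]
  refine sum_congr rfl fun k hk => ?_
  have hk : y + k ≤ n := by have := mem_range.mp hk; omega
  have shape : betaDensity ((k : ℝ) + y + 1) ((n : ℝ) - y - k + 1) p2 =
      betaDensity (((y + k : ℕ) : ℝ) + 1) (((n - (y + k) : ℕ) : ℝ) + 1) p2 := by
    rw [Nat.cast_sub hk]
    push_cast
    ring_nf
  rw [shape, w_eq_div]
  field_simp

theorem posterior_density_beta_mixture (n y : ℕ) (hn : 0 < n) (hy : y ≤ n)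
    (p2 : ℝ) (hp2 : p2 ∈ Set.Ioo (0:ℝ) 1) :
    (∀ k ∈ Finset.range (n - y + 1), 0 ≤ w n y k) ∧
    (∑ k ∈ Finset.range (n - y + 1), w n y k = 1) ∧
    (∫ p1 in (0:ℝ)..1, (n.choose y : ℝ) * (p1 * p2) ^ y * (1 - p1 * p2) ^ (n - y)) /
        (∫ q2 in (0:ℝ)..1, ∫ p1 in (0:ℝ)..1,
            (n.choose y : ℝ) * (p1 * q2) ^ y * (1 - p1 * q2) ^ (n - y))
      = ∑ k ∈ Finset.range (n - y + 1),
          w n y k * betaDensity ((k : ℝ) + y + 1) ((n : ℝ) - y - k + 1) p2 :=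
  posterior_density_beta_mixture_general n y hy p2
end

section
/- Fix α ∈ (0,1). With p_n(y) = (H_{n+1} - H_y)/(n+1) denoting the marginal probability mass function of Y for sample size n, one has lim_{n→∞} n · p_n(⌊αn⌋) = -ln(α). -/
/-!
Since `H m = log m + γ + o(1)`, the difference `H (n + 1) - H ⌊a n⌋` tends to
`log ((n + 1) / ⌊a n⌋) → -log a`, and the factor `n / (n + 1)` tends to `1`.
-/

open Filter Real Topology

lemma H_eq_harmonic (m : ℕ) : H m = harmonic m := by
  simp [H, harmonic, one_div]

lemma tendsto_harmonic_sub_harmonic {ι : Type*} {l : Filter ι} {u v : ι → ℕ} {c : ℝ}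
    (hu : Tendsto u l atTop) (hv : Tendsto v l atTop)
    (huv : Tendsto (fun i => (u i : ℝ) / v i) l (𝓝 c)) (hc : 0 < c) :
    Tendsto (fun i => (harmonic (u i) : ℝ) - harmonic (v i)) l (𝓝 (log c)) := by
  have hlim : Tendsto (fun i => ((harmonic (u i) : ℝ) - log (u i))
      - ((harmonic (v i) : ℝ) - log (v i)) + log ((u i : ℝ) / v i)) l
      (𝓝 (eulerMascheroniConstant - eulerMascheroniConstant + log c)) :=
    ((tendsto_harmonic_sub_log.comp hu).sub (tendsto_harmonic_sub_log.comp hv)).add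
      ((continuousAt_log hc.ne').tendsto.comp huv)
  rw [sub_self, zero_add] at hlim
  refine hlim.congr' ?_
  filter_upwards [hu.eventually_ge_atTop 1, hv.eventually_ge_atTop 1] with i hui hvi
  have hui' : (u i : ℝ) ≠ 0 := by positivity
  have hvi' : (v i : ℝ) ≠ 0 := by positivity
  rw [log_div hui' hvi']
  ring

lemma tendsto_nat_floor_mul_div_add_one {a : ℝ} (ha : 0 ≤ a) :
    Tendsto (fun n : ℕ => (⌊a * n⌋₊ : ℝ) / (n + 1)) atTop (𝓝 a) := by
  have h := ((tendsto_nat_floor_mul_div_atTop ha).comp tendsto_natCast_atTop_atTop).mul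
    (tendsto_natCast_div_add_atTop (1 : ℝ))
  rw [mul_one] at h
  refine h.congr' ?_
  filter_upwards [eventually_ge_atTop 1] with n hn
  have hn' : (n : ℝ) ≠ 0 := by positivity
  simp only [Function.comp_apply]
  field_simp

theorem normalization_constant_limit (a : ℝ) (ha : a ∈ Set.Ioo (0:ℝ) 1) :
    Filter.Tendsto
      (fun n : ℕ => (n : ℝ) * ((H (n + 1) - H ⌊a * n⌋₊) / ((n : ℝ) + 1)))
      Filter.atTop (nhds (-Real.log a)) := by
  have hdiff : Tendsto (fun n : ℕ => (harmonic ⌊a * n⌋₊ : ℝ) - harmonic (n + 1)) atTop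
      (𝓝 (log a)) := by
    refine tendsto_harmonic_sub_harmonic (tendsto_nat_floor_mul_atTop a ha.1)
      (tendsto_add_atTop_nat 1) ?_ ha.1
    simpa only [Nat.cast_add, Nat.cast_one] using tendsto_nat_floor_mul_div_add_one ha.1.le
  have h := (tendsto_natCast_div_add_atTop (1 : ℝ)).mul hdiff.neg
  rw [one_mul] at h
  refine h.congr fun n => ?_
  simp only [H_eq_harmonic]
  ring
end
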